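/- arXiv:2605.29385 — 2 statements merged into one kernel-verified Lean document; each statement's English description precedes it below -/
import Mathlib

section
/- Let $\mathcal{A} \in \mathbb{R}^{N\times N}$, $\mathcal{B} \in \mathbb{R}^{N\times p}$, $\mathcal{C}_y \in \mathbb{R}^{p\times N}$, $\mathcal{C}_u \in \mathbb{R}^{p\times N}$, and suppose $\mathcal{C}_u \mathcal{B}$ is nonsingular; set $\Lambda = (\mathcal{C}_u\mathcal{B})^{-1}$. Define $\mathcal{A}_p = \mathcal{A} - \mathcal{A}\mathcal{B}\Lambda\mathcal{C}_u$, $\mathcal{B}_p = \mathcal{A}\mathcal{B}\Lambda$, $\mathcal{C}_p = \mathcal{C}_y(I - \mathcal{B}\Lambda\mathcal{C}_u)$, $\mathcal{D}_p = \mathcal{C}_y\mathcal{B}\Lambda$. Then for every $z \in \mathbb{C}$ such that $zI - \mathcal{A}$, $zI - \mathcal{A}_p$, and $\mathcal{C}_u(zI-\mathcal{A})^{-1}\mathcal{B}$ are all invertible, the identity $\big[\mathcal{C}_y(zI-\mathcal{A})^{-1}\mathcal{B}\big]\big[\mathcal{C}_u(zI-\mathcal{A})^{-1}\mathcal{B}\big]^{-1}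 = \mathcal{C}_p(zI - \mathcal{A}_p)^{-1}\mathcal{B}_p + \mathcal{D}_p$ holds. -/
/-!
Write `Λ = (C_u B)⁻¹` and `P = 1 - B Λ C_u`. Then `P B = 0` and `𝒜_p = 𝒜 P`, so `𝒜_p B = 0` and
`(z - 𝒜_p)⁻¹ B = z⁻¹ B`. As `(z - 𝒜_p) - (z - 𝒜) = 𝒜 B Λ C_u`, the resolvent identity shows that
`Y = P (z - 𝒜_p)⁻¹ 𝒜 B Λ + B Λ` satisfies `Y T_ur = (z - 𝒜)⁻¹ B`; multiplying by `C_y` on the left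
and `T_ur⁻¹` on the right gives `T_yr T_ur⁻¹ = C_y Y`, which is the plant's realization.
-/

open Matrix

namespace Matrix

variable {n m : Type*} [Fintype n] [DecidableEq n]

theorem map_nonsing_inv {R S : Type*} [CommRing R] [CommRing S] (f : R →+* S)
    {A : Matrix n n R} (hA : IsUnit A) : A⁻¹.map f = (A.map f)⁻¹ := by
  refine (inv_eq_left_inv ?_).symm
  rw [← Matrix.map_mul, nonsing_inv_mul _ ((isUnit_iff_isUnit_det A).mp hA),
    Matrix.map_one _ f.map_zero f.map_one]

variable {K : Type*} [Field K]

theorem inv_mul_eq_inv_smul_of_mul_eq_smul {M : Matrix n n K} {X : Matrix n m K} {z : K}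
    (hM : IsUnit M) (hMX : M * X = z • X) : M⁻¹ * X = z⁻¹ • X := by
  have hX : z • (M⁻¹ * X) = X := by
    rw [← Matrix.mul_smul, ← hMX,
      nonsing_inv_mul_cancel_left _ _ ((isUnit_iff_isUnit_det M).mp hM)]
  rcases eq_or_ne z 0 with rfl | hz
  · rw [zero_smul] at hX
    rw [← hX, Matrix.mul_zero, smul_zero]
  · rw [eq_inv_smul_iff₀ hz, hX]

theorem inv_mul_sub_mul_inv {M M' : Matrix n n K} (hM : IsUnit M) (hM' : IsUnit M') :
    M'⁻¹ * (M' - M) * M⁻¹ = M⁻¹ - M'⁻¹ := by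
  rw [← neg_sub M, Matrix.mul_neg, Matrix.neg_mul, ← inv_sub_inv (iff_of_true hM' hM), neg_sub]

variable [Fintype m] [DecidableEq m] {A : Matrix n n K} {B : Matrix n m K} {Cu : Matrix m n K}
  {Λ : Matrix m m K}

theorem one_sub_mul_mul_mul_eq_zero (hΛ : Λ * (Cu * B) = 1) : (1 - B * Λ * Cu) * B = 0 := by
  rw [Matrix.sub_mul, Matrix.one_mul, Matrix.mul_assoc (B * Λ), Matrix.mul_assoc B, hΛ,
    Matrix.mul_one, sub_self]

theorem plant_realization_mul_transfer_eq (hΛ : Λ * (Cu * B) = 1) {z : K}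
    (hM : IsUnit (z • 1 - A)) (hMp : IsUnit (z • 1 - (A - A * B * Λ * Cu))) :
    ((1 - B * Λ * Cu) * (z • 1 - (A - A * B * Λ * Cu))⁻¹ * (A * B * Λ) + B * Λ) *
      (Cu * (z • 1 - A)⁻¹ * B) = (z • 1 - A)⁻¹ * B := by
  have hres := inv_mul_sub_mul_inv hM hMp
  rw [sub_sub_sub_cancel_left, sub_sub_cancel] at hres
  set P := 1 - B * Λ * Cu
  set M := z • 1 - A
  set Mp := z • 1 - (A - A * B * Λ * Cu)
  have hPB : P * B = 0 := one_sub_mul_mul_mul_eq_zero hΛ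
  have hMp_eq : Mp = z • 1 - A * P := by
    simp only [Mp, P, Matrix.mul_sub, Matrix.mul_one, Matrix.mul_assoc]
  have hMpB : Mp * B = z • B := by
    rw [hMp_eq, Matrix.sub_mul, Matrix.mul_assoc, hPB, Matrix.mul_zero, sub_zero,
      Matrix.smul_mul, Matrix.one_mul]
  have hPMpB : P * (Mp⁻¹ * B) = 0 := by
    rw [inv_mul_eq_inv_smul_of_mul_eq_smul hMp hMpB, Matrix.mul_smul, hPB, smul_zero]
  calc _ = P * (Mp⁻¹ * (A * B * Λ * Cu) * M⁻¹) * B + B * Λ * Cu * M⁻¹ * B := by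
        simp only [Matrix.add_mul, Matrix.mul_assoc]
    _ = P * (M⁻¹ - Mp⁻¹) * B + B * Λ * Cu * M⁻¹ * B := by rw [hres]
    _ = M⁻¹ * B - P * (Mp⁻¹ * B) := by
        simp only [P, Matrix.sub_mul, Matrix.mul_sub, Matrix.one_mul, Matrix.mul_assoc]; abel
    _ = M⁻¹ * B := by rw [hPMpB, sub_zero]

theorem transfer_mul_inv_transfer_eq (Cy : Matrix m n K) (hCuB : IsUnit (Cu * B)) {z : K}
    (hM : IsUnit (z • 1 - A)) (hMp : IsUnit (z • 1 - (A - A * B * (Cu * B)⁻¹ * Cu)))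
    (hT : IsUnit (Cu * (z • 1 - A)⁻¹ * B)) :
    Cy * (z • 1 - A)⁻¹ * B * (Cu * (z • 1 - A)⁻¹ * B)⁻¹ =
      Cy * (1 - B * (Cu * B)⁻¹ * Cu) * (z • 1 - (A - A * B * (Cu * B)⁻¹ * Cu))⁻¹ *
        (A * B * (Cu * B)⁻¹) + Cy * B * (Cu * B)⁻¹ := by
  have hΛ := nonsing_inv_mul _ ((isUnit_iff_isUnit_det _).mp hCuB)
  rw [Matrix.mul_assoc Cy, ← plant_realization_mul_transfer_eq hΛ hM hMp, Matrix.mul_assoc Cy,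
    mul_nonsing_inv_cancel_right _ _ ((isUnit_iff_isUnit_det _).mp hT)]
  simp only [Matrix.mul_add, Matrix.mul_assoc]

end Matrix

theorem Matrix.map_ofReal_mul {l m n : Type*} [Fintype m] (X : Matrix l m ℝ) (Y : Matrix m n ℝ) :
    (X * Y).map Complex.ofReal = X.map Complex.ofReal * Y.map Complex.ofReal :=
  Matrix.map_mul (f := Complex.ofRealHom)

theorem stmt4 {N p : ℕ}
    (A : Matrix (Fin N) (Fin N) ℝ) (B : Matrix (Fin N) (Fin p) ℝ)
    (Cy Cu : Matrix (Fin p) (Fin N) ℝ)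
    (hCuB : IsUnit (Cu * B)) (z : ℂ)
    (h1 : IsUnit (z • (1 : Matrix (Fin N) (Fin N) ℂ) - A.map Complex.ofReal))
    (h2 : IsUnit (z • (1 : Matrix (Fin N) (Fin N) ℂ) -
        (A - A * B * (Cu * B)⁻¹ * Cu).map Complex.ofReal))
    (h3 : IsUnit (Cu.map Complex.ofReal *
        (z • (1 : Matrix (Fin N) (Fin N) ℂ) - A.map Complex.ofReal)⁻¹ *
        B.map Complex.ofReal)) :
    (Cy.map Complex.ofReal *
        (z • (1 : Matrix (Fin N) (Fin N) ℂ) - A.map Complex.ofReal)⁻¹ *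
        B.map Complex.ofReal) *
      (Cu.map Complex.ofReal *
        (z • (1 : Matrix (Fin N) (Fin N) ℂ) - A.map Complex.ofReal)⁻¹ *
        B.map Complex.ofReal)⁻¹ =
    (Cy * (1 - B * (Cu * B)⁻¹ * Cu)).map Complex.ofReal *
        (z • (1 : Matrix (Fin N) (Fin N) ℂ) -
          (A - A * B * (Cu * B)⁻¹ * Cu).map Complex.ofReal)⁻¹ *
        (A * B * (Cu * B)⁻¹).map Complex.ofReal +
      (Cy * B * (Cu * B)⁻¹).map Complex.ofReal := by
  have hCuB' : IsUnit (Cu.map Complex.ofReal * B.map Complex.ofReal) := by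
    rw [← Matrix.map_ofReal_mul]
    exact hCuB.map Complex.ofRealHom.mapMatrix
  have hinv : (Cu * B)⁻¹.map Complex.ofReal =
      (Cu.map Complex.ofReal * B.map Complex.ofReal)⁻¹ := by
    rw [← Matrix.map_ofReal_mul]
    exact Matrix.map_nonsing_inv Complex.ofRealHom hCuB
  simp only [Matrix.map_ofReal_mul, Matrix.map_sub _ Complex.ofReal_sub, hinv,
    Matrix.map_one _ Complex.ofReal_zero Complex.ofReal_one] at h2 ⊢
  exact Matrix.transfer_mul_inv_transfer_eq _ hCuB' h1 h2 h3
end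

section
/- Let $u : \mathbb{N} \to \mathbb{R}^{m}$ and define the cycled signal $\check{u} : \mathbb{N} \to \mathbb{R}^{Mm}$ whose $j$-th sub-vector ($j = 0,\dots,M-1$) at time $k$ equals $u(k)$ if $j = k \bmod M$ and $0$ otherwise. Let $(A_k, B_k, C_k, D_k)$ be an $M$-periodic system with state recursion $x(k+1) = A_k x(k) + B_k u(k)$, $y(k) = C_k x(k) + D_k u(k)$, $x(0) = x_0$, and let $(\check{A}, \check{B}, \check{C}, \check{D})$ be its cyclic reformulation with cycled state recursion $\check{x}(k+1) = \check{A}\check{x}(k) + \check{B}\check{u}(k)$, $\check{y}(k) = \check{C}\check{x}(k) + \check{D}\check{u}(k)$, initialized with $\check{x}(0)$ having sub-vector $x_0$ in position $0$ and zeros elsewhere. Then for all $k$, the $(k \bmod M)$-th sub-vector of $\check{x}(k)$ equals $x(k)$, all other sub-vectors of $\check{x}(k)$ are zero, and the $(k \bmod M)$-th sub-vector of $\check{y}(k)$ equals $y(k)$ with all other sub-vectors zero. -/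
/-! The cycled signals are supported on a single block, the one indexed by the time step mod `M`.
A block-cyclic matrix moves such a vector from block `c` to block `c + 1`, applying its `c`-th
block, and a block-diagonal matrix keeps it in block `c`; so by induction on `k` the cycled
state carries `x k` in block `k mod M`, and the output follows. -/

open Matrix
open Fin.NatCast

/-- Block-cyclic matrix with blocks indexed by arbitrary types:
block `X k` sits in block row `k+1` (mod `M`), block column `k`. -/
def blockCyc {M : ℕ} [NeZero M] {α β : Type*} (X : Fin M → Matrix α β ℝ) :
    Matrix (Fin M × α) (Fin M × β) ℝ :=
  fun p q => if p.1 = q.1 + 1 then X q.1 p.2 q.2 else 0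

/-- Block-diagonal matrix built from `M` blocks. -/
def blockDiagM {M : ℕ} {α β : Type*} (X : Fin M → Matrix α β ℝ) :
    Matrix (Fin M × α) (Fin M × β) ℝ :=
  fun a b => if a.1 = b.1 then X a.1 a.2 b.2 else 0

def blockSingle {M : ℕ} {α R : Type*} [Zero R] (c : Fin M) (w : α → R) : Fin M × α → R :=
  fun q => if q.1 = c then w q.2 else 0

section blockSingle

variable {M : ℕ} {α β : Type*} [Fintype β]

theorem blockSingle_add {R : Type*} [AddZeroClass R] (c : Fin M) (v w : α → R) :
    blockSingle c v + blockSingle c w = blockSingle c (v + w) := by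
  ext q
  simp only [blockSingle, Pi.add_apply]
  split_ifs <;> simp

theorem blockCyc_mulVec_blockSingle [NeZero M] (X : Fin M → Matrix α β ℝ) (c : Fin M)
    (w : β → ℝ) : blockCyc X *ᵥ blockSingle c w = blockSingle (c + 1) (X c *ᵥ w) := by
  ext q
  simp only [mulVec, dotProduct, blockCyc, blockSingle, Fintype.sum_prod_type]
  rw [Finset.sum_eq_single c (fun b _ hb => by simp [hb]) (by simp)]
  by_cases h : q.1 = c + 1 <;> simp [h]

theorem blockDiagM_mulVec_blockSingle (X : Fin M → Matrix α β ℝ) (c : Fin M) (w : β → ℝ) :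
    blockDiagM X *ᵥ blockSingle c w = blockSingle c (X c *ᵥ w) := by
  ext q
  simp only [mulVec, dotProduct, blockDiagM, blockSingle, Fintype.sum_prod_type]
  rw [Finset.sum_eq_single c (fun b _ hb => by simp [hb]) (by simp)]
  by_cases h : q.1 = c <;> simp [h]

end blockSingle

theorem stmt17 {M n m p : ℕ} [NeZero M]
    (A : Fin M → Matrix (Fin n) (Fin n) ℝ) (B : Fin M → Matrix (Fin n) (Fin m) ℝ)
    (C : Fin M → Matrix (Fin p) (Fin n) ℝ) (D : Fin M → Matrix (Fin p) (Fin m) ℝ)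
    (u : ℕ → Fin m → ℝ) (x0 : Fin n → ℝ)
    (x : ℕ → Fin n → ℝ) (y : ℕ → Fin p → ℝ)
    (X : ℕ → Fin M × Fin n → ℝ) (Y : ℕ → Fin M × Fin p → ℝ)
    (uch : ℕ → Fin M × Fin m → ℝ)
    (huch : ∀ (k : ℕ) (q : Fin M × Fin m),
      uch k q = if q.1 = (k : Fin M) then u k q.2 else 0)
    (hx0 : x 0 = x0)
    (hx : ∀ k : ℕ, x (k + 1) = (A (k : Fin M)).mulVec (x k) + (B (k : Fin M)).mulVec (u k))
    (hy : ∀ k : ℕ, y k = (C (k : Fin M)).mulVec (x k) + (D (k : Fin M)).mulVec (u k))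
    (hX0 : ∀ q : Fin M × Fin n, X 0 q = if q.1 = 0 then x0 q.2 else 0)
    (hX : ∀ k : ℕ, X (k + 1) = (blockCyc A).mulVec (X k) + (blockCyc B).mulVec (uch k))
    (hY : ∀ k : ℕ, Y k = (blockDiagM C).mulVec (X k) + (blockDiagM D).mulVec (uch k)) :
    ∀ k : ℕ,
      (∀ q : Fin M × Fin n, X k q = if q.1 = (k : Fin M) then x k q.2 else 0) ∧
      (∀ q : Fin M × Fin p, Y k q = if q.1 = (k : Fin M) then y k q.2 else 0) := by
  have hU : ∀ k, uch k = blockSingle (k : Fin M) (u k) := fun k => funext (huch k)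
  have hXk : ∀ k : ℕ, X k = blockSingle (k : Fin M) (x k) := by
    intro k
    induction k with
    | zero => rw [hx0]; exact funext hX0
    | succ k ih =>
      rw [hX k, ih, hU, blockCyc_mulVec_blockSingle, blockCyc_mulVec_blockSingle,
        blockSingle_add, hx k, Nat.cast_succ]
  have hYk : ∀ k : ℕ, Y k = blockSingle (k : Fin M) (y k) := by
    intro k
    rw [hY k, hXk, hU, blockDiagM_mulVec_blockSingle, blockDiagM_mulVec_blockSingle,
      blockSingle_add, hy k]
  exact fun k => ⟨congrFun (hXk k), congrFun (hYk k)⟩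
end
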